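/- arXiv:2405.02720 — 3 statements merged into one kernel-verified Lean document; each statement's English description precedes it below -/
import Mathlib

section
/- Let ρ : ℝ → [0,1] be smooth with ρ(s) = 0 for |s| ≤ 1 and ρ(s) = 1 for |s| ≥ 2, and for k ∈ ℕ let ρ_k act on ℓ²(ℤ^N) by (ρ_k u)_i = ρ(|i|/k)u_i. Then there is a constant c₁ > 0, independent of k and u, such that for all u ∈ ℓ²: -2 Σ_{j=1}^N (B_j u, B_j(ρ_k² u)) ≤ (c₁/k)‖u‖². -/
open scoped RealInnerProductSpace
noncomputable section

/-- ℓ² space of square-summable real sequences indexed by ℤ^N. -/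
abbrev ellTwo (N : ℕ) := lp (fun _ : Fin N → ℤ => ℝ) 2

/-- Euclidean norm `|i|` of `i ∈ ℤ^N`. -/
def nrm (N : ℕ) (i : Fin N → ℤ) : ℝ := Real.sqrt (∑ t : Fin N, ((i t : ℝ)) ^ 2)

/-- Square-summability of the coordinates of an `ℓ²` element. -/
lemma ellTwo_sq_summable {N : ℕ} (u : ellTwo N) : Summable (fun i => (u i) ^ 2) := by
  have h := (lp.memℓp u).summable (p := 2) (by norm_num)
  simpa [Real.rpow_natCast, sq_abs] using h

/-- The `ℓ²` norm squared as a sum of squares. -/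
lemma ellTwo_tsum_sq {N : ℕ} (u : ellTwo N) : ∑' i, (u i) ^ 2 = ‖u‖ ^ 2 := by
  have h := lp.norm_rpow_eq_tsum (p := 2) (by norm_num) u
  simpa [Real.rpow_natCast, sq_abs] using h.symm

/-- The real inner product on `ℓ²` as a sum of products. -/
lemma ellTwo_inner_eq {N : ℕ} (f g : ellTwo N) : ⟪f, g⟫ = ∑' i, f i * g i := by
  rw [lp.inner_eq_tsum]
  exact tsum_congr fun i => by simp [RCLike.inner_apply, mul_comm]

/-- The Euclidean norm on `ℤ^N` changes by at most `1` along a unit step. -/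
lemma nrm_shift {N : ℕ} (i : Fin N → ℤ) (j : Fin N) :
    |nrm N (i + Pi.single j 1) - nrm N i| ≤ 1 := by
  set v : EuclideanSpace ℝ (Fin N) := WithLp.toLp 2 (fun t => (i t : ℝ)) with hv
  set w : EuclideanSpace ℝ (Fin N) := WithLp.toLp 2 (fun t => (((Pi.single j (1:ℤ) : Fin N → ℤ)) t : ℝ)) with hw
  have h1 : nrm N i = ‖v‖ := by simp [nrm, EuclideanSpace.norm_eq, hv, sq_abs]
  have h2 : nrm N (i + Pi.single j 1) = ‖v + w‖ := by
    simp [nrm, EuclideanSpace.norm_eq, hv, hw, sq_abs, PiLp.add_apply]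
  have h3 : ‖w‖ = 1 := by
    simp [EuclideanSpace.norm_eq, hw, Pi.single_apply, sq_abs]
  calc |nrm N (i + Pi.single j 1) - nrm N i| = |‖v + w‖ - ‖v‖| := by rw [h1, h2]
    _ ≤ ‖v + w - v‖ := abs_norm_sub_norm_le _ _
    _ = 1 := by simp [h3]

/-- `ρ²` is globally Lipschitz for a cutoff function `ρ`. -/
lemma rho_sq_lipschitz (ρ : ℝ → ℝ) (hρsmooth : ContDiff ℝ (⊤ : ℕ∞) ρ)
    (hρ1 : ∀ s : ℝ, 2 ≤ |s| → ρ s = 1) :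
    ∃ C : ℝ, 0 ≤ C ∧ ∀ x y : ℝ, |ρ x ^ 2 - ρ y ^ 2| ≤ C * |x - y| := by
  set h : ℝ → ℝ := fun s => ρ s ^ 2 - 1 with hh
  have hcs : HasCompactSupport h := by
    apply HasCompactSupport.intro (isCompact_Icc (a := (-2:ℝ)) (b := 2))
    intro s hs
    have h2 : 2 ≤ |s| := by
      simp only [Set.mem_Icc, not_and_or, not_le] at hs
      rw [le_abs]
      rcases hs with h1 | h1
      · exact Or.inr (by linarith)
      · exact Or.inl (by linarith)
    simp [hh, hρ1 s h2]
  have hcd : ContDiff ℝ 1 h := ((hρsmooth.pow 2).sub contDiff_const).of_le (by simp)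
  obtain ⟨C, hC⟩ := hcd.lipschitzWith_of_hasCompactSupport hcs one_ne_zero
  refine ⟨C, C.coe_nonneg, fun x y => ?_⟩
  have := hC.dist_le_mul x y
  simpa [hh, Real.dist_eq] using this

/-- Let `ρ : ℝ → [0,1]` be smooth with `ρ = 0` on `|s| ≤ 1` and `ρ = 1`
on `|s| ≥ 2`, and `(ρ_k u)_i = ρ(|i|/k)u_i`. There is a constant `c₁ > 0`, independent
of `k` and `u`, such that for all `u ∈ ℓ²`:
`-2 Σ_j (B_j u, B_j(ρ_k² u)) ≤ (c₁/k)‖u‖²`. -/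
theorem cutoff_commutator_estimate (N : ℕ)
    (B : Fin N → ellTwo N → ellTwo N)
    (hB : ∀ (j : Fin N) (u : ellTwo N) (i : Fin N → ℤ),
      B j u i = u (i + Pi.single j 1) - u i)
    (ρ : ℝ → ℝ)
    (hρsmooth : ContDiff ℝ (⊤ : ℕ∞) ρ)
    (hρrange : ∀ s, ρ s ∈ Set.Icc (0 : ℝ) 1)
    (hρ0 : ∀ s : ℝ, |s| ≤ 1 → ρ s = 0)
    (hρ1 : ∀ s : ℝ, 2 ≤ |s| → ρ s = 1)
    (Q : ℕ → ellTwo N → ellTwo N)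
    (hQ : ∀ (k : ℕ) (u : ellTwo N) (i : Fin N → ℤ),
      Q k u i = (ρ (nrm N i / k)) ^ 2 * u i) :
    ∃ c₁ : ℝ, 0 < c₁ ∧
      ∀ (k : ℕ), 1 ≤ k → ∀ u : ellTwo N,
        -2 * ∑ j : Fin N, ⟪B j u, B j (Q k u)⟫ ≤ (c₁ / k) * ‖u‖ ^ 2 := by
  obtain ⟨C, hC0, hLipC⟩ := rho_sq_lipschitz ρ hρsmooth hρ1
  refine ⟨4 * N * C + 1, by positivity, fun k hk u => ?_⟩
  have hk0 : (0:ℝ) < (k:ℝ) := by exact_mod_cast hk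
  have husum : Summable (fun i => (u i) ^ 2) := ellTwo_sq_summable u
  have hS : ∑' i, (u i) ^ 2 = ‖u‖ ^ 2 := ellTwo_tsum_sq u
  -- the estimate for one direction j
  have key : ∀ j : Fin N, -⟪B j u, B j (Q k u)⟫ ≤ (2 * C / k) * ‖u‖ ^ 2 := by
    intro j
    set e : Fin N → ℤ := Pi.single j 1 with he
    set g : (Fin N → ℤ) → ℝ := fun i => ρ (nrm N i / k) ^ 2 with hg
    have hg01 : ∀ i, 0 ≤ g i ∧ g i ≤ 1 := fun i => by
      have h := hρrange (nrm N i / k)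
      refine ⟨sq_nonneg _, ?_⟩
      simp only [hg]
      nlinarith [h.1, h.2]
    have ha : ∀ i, B j u i = u (i + e) - u i := fun i => hB j u i
    have hb : ∀ i, B j (Q k u) i = g (i + e) * u (i + e) - g i * u i := fun i => by
      rw [hB j (Q k u) i, hQ k u (i + e), hQ k u i]
    have hshiftsum : Summable (fun i => (u (i + e)) ^ 2) :=
      ((Equiv.addRight e).summable_iff (f := fun i => (u i) ^ 2)).2 husum
    have hshifteq : ∑' i, (u (i + e)) ^ 2 = ∑' i, (u i) ^ 2 :=
      (Equiv.addRight e).tsum_eq (fun i => (u i) ^ 2)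
    have hΔ : ∀ i, |g (i + e) - g i| ≤ C / k := by
      intro i
      calc |g (i + e) - g i| ≤ C * |nrm N (i + e) / k - nrm N i / k| := hLipC _ _
        _ = C * (|nrm N (i + e) - nrm N i| / k) := by
            rw [div_sub_div_same, abs_div, abs_of_pos hk0]
        _ ≤ C * (1 / k) := by gcongr; exact nrm_shift i j
        _ = C / k := by ring
    set t1 : (Fin N → ℤ) → ℝ := fun i => g i * (u (i + e) - u i) ^ 2 with ht1
    set t2 : (Fin N → ℤ) → ℝ :=
      fun i => (g (i + e) - g i) * ((u (i + e) - u i) * u (i + e)) with ht2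
    have hdecomp : ∀ i, (B j u i) * (B j (Q k u) i) = t1 i + t2 i := by
      intro i; rw [ha i, hb i]; simp only [ht1, ht2]; ring
    have hasum : Summable (fun i => (u (i + e) - u i) ^ 2) := by
      have h := ellTwo_sq_summable (B j u)
      simpa only [ha] using h
    have hM : ∀ i, |t2 i| ≤ (C / k) * ((3/2) * (u (i + e)) ^ 2 + (1/2) * (u i) ^ 2) := by
      intro i
      have h1 := hΔ i
      have h2 : |t2 i| = |g (i + e) - g i| * (|u (i + e) - u i| * |u (i + e)|) := by
        simp only [ht2, abs_mul]
      have habs : |u (i + e) - u i| ≤ |u (i + e)| + |u i| := abs_sub _ _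
      have h3 : |u (i + e) - u i| * |u (i + e)| ≤
          (3/2) * (u (i + e)) ^ 2 + (1/2) * (u i) ^ 2 := by
        nlinarith [sq_nonneg (|u (i + e)| - |u i|), sq_abs (u (i + e)), sq_abs (u i),
          abs_nonneg (u (i + e)), abs_nonneg (u i)]
      calc |t2 i| = |g (i + e) - g i| * (|u (i + e) - u i| * |u (i + e)|) := h2
        _ ≤ (C / k) * ((3/2) * (u (i + e)) ^ 2 + (1/2) * (u i) ^ 2) := by
            apply mul_le_mul h1 h3 (by positivity) (by positivity)
    have hMsum : Summable (fun i => (C / k) * ((3/2) * (u (i + e)) ^ 2 + (1/2) * (u i) ^ 2)) :=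
      ((hshiftsum.mul_left _).add (husum.mul_left _)).mul_left _
    have ht2abs : Summable (fun i => |t2 i|) :=
      Summable.of_nonneg_of_le (fun i => abs_nonneg _) hM hMsum
    have ht2sum : Summable t2 := ht2abs.of_abs
    have ht1sum : Summable t1 :=
      Summable.of_nonneg_of_le (fun i => mul_nonneg (hg01 i).1 (sq_nonneg _))
        (fun i => mul_le_of_le_one_left (sq_nonneg _) (hg01 i).2) hasum
    have hinner : ⟪B j u, B j (Q k u)⟫ = ∑' i, t1 i + ∑' i, t2 i := by
      rw [ellTwo_inner_eq]
      rw [tsum_congr hdecomp]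
      exact Summable.tsum_add ht1sum ht2sum
    rw [hinner]
    have h5 : 0 ≤ ∑' i, t1 i := tsum_nonneg fun i => mul_nonneg (hg01 i).1 (sq_nonneg _)
    have h6 : -∑' i, t2 i ≤ ∑' i, |t2 i| := by
      rw [← tsum_neg]
      exact Summable.tsum_le_tsum (fun i => neg_le_abs _) ht2sum.neg ht2abs
    have h7 : ∑' i, |t2 i| ≤
        ∑' i, (C / k) * ((3/2) * (u (i + e)) ^ 2 + (1/2) * (u i) ^ 2) :=
      Summable.tsum_le_tsum hM ht2abs hMsum
    have h8 : ∑' i, (C / k) * ((3/2) * (u (i + e)) ^ 2 + (1/2) * (u i) ^ 2)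
        = (2 * C / k) * ‖u‖ ^ 2 := by
      rw [tsum_mul_left, Summable.tsum_add (hshiftsum.mul_left _) (husum.mul_left _),
        tsum_mul_left, tsum_mul_left, hshifteq, hS]
      ring
    linarith
  have hsum : ∑ j : Fin N, -⟪B j u, B j (Q k u)⟫ ≤ (N : ℝ) * ((2 * C / k) * ‖u‖ ^ 2) := by
    calc ∑ j : Fin N, -⟪B j u, B j (Q k u)⟫
        ≤ ∑ _j : Fin N, (2 * C / k) * ‖u‖ ^ 2 := Finset.sum_le_sum fun j _ => key j
      _ = (N : ℝ) * ((2 * C / k) * ‖u‖ ^ 2) := by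
          rw [Finset.sum_const, Finset.card_univ, Fintype.card_fin]; simp [nsmul_eq_mul]
  rw [Finset.sum_neg_distrib] at hsum
  have hpos : 0 ≤ ‖u‖ ^ 2 / (k:ℝ) := by positivity
  have h9 : (N : ℝ) * ((2 * C / k) * ‖u‖ ^ 2) * 2 ≤ (4 * N * C + 1) / k * ‖u‖ ^ 2 := by
    have e1 : (N : ℝ) * ((2 * C / k) * ‖u‖ ^ 2) * 2 = 4 * N * C * ‖u‖ ^ 2 / k := by ring
    have e2 : (4 * (N:ℝ) * C + 1) / k * ‖u‖ ^ 2 = 4 * N * C * ‖u‖ ^ 2 / k + ‖u‖ ^ 2 / k := by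
      ring
    rw [e1, e2]; linarith
  linarith
end
end

section
/- Let δ ∈ (0,1) and κ_δ(s) = (1+δ²s²)^{1/2}, acting on ℓ²(ℤ^N) by (κ_δ u)_i = κ_δ(|i|)u_i. Then for every u ∈ ℓ², -Σ_{j=1}^N (B_j u, B_j(κ_δ² u)) ≤ 3Nδ² ‖κ_δ u‖². -/
noncomputable section

/-- `|i|²` for `i ∈ ℤ^N`. -/
def nrmSq (N : ℕ) (i : Fin N → ℤ) : ℝ := ∑ t : Fin N, ((i t : ℝ)) ^ 2

lemma nrmSq_nonneg (N : ℕ) (i : Fin N → ℤ) : 0 ≤ nrmSq N i :=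
  Finset.sum_nonneg fun _ _ => sq_nonneg _

lemma nrmSq_shift (N : ℕ) (j : Fin N) (i : Fin N → ℤ) :
    nrmSq N (i + Pi.single j 1) = nrmSq N i + (2 * (i j : ℝ) + 1) := by
  unfold nrmSq
  have h : ∀ t : Fin N, ((((i + Pi.single j 1 : Fin N → ℤ) t : ℤ) : ℝ)) ^ 2
      = ((i t : ℝ)) ^ 2 + (if t = j then 2 * (i j : ℝ) + 1 else 0) := by
    intro t
    rw [Pi.add_apply]
    by_cases ht : t = j
    · subst ht
      rw [Pi.single_eq_same, if_pos rfl]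
      push_cast
      ring
    · rw [Pi.single_eq_of_ne ht, if_neg ht]
      push_cast
      ring
  simp_rw [h, Finset.sum_add_distrib]
  congr 1
  simp

/-- Let `δ ∈ (0,1)` and `κ_δ(s) = (1+δ²s²)^{1/2}`. For every finitely
supported `u` on ℤ^N (where both sides are finite),
`-Σ_j (B_j u, B_j(κ_δ² u)) ≤ 3Nδ² ‖κ_δ u‖²`,
with `(B_j u)_i = u_{i+e_j} - u_i` and `(κ_δ² u)_i = (1+δ²|i|²) u_i`. -/
theorem weighted_commutator_estimate (N : ℕ) (δ : ℝ) (hδ : δ ∈ Set.Ioo (0 : ℝ) 1)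
    (u : (Fin N → ℤ) → ℝ) (hu : (Function.support u).Finite) :
    -(∑ j : Fin N, ∑' i : Fin N → ℤ,
        (u (i + Pi.single j 1) - u i) *
          ((1 + δ ^ 2 * nrmSq N (i + Pi.single j 1)) * u (i + Pi.single j 1) -
            (1 + δ ^ 2 * nrmSq N i) * u i))
      ≤ 3 * N * δ ^ 2 * ∑' i : Fin N → ℤ, (1 + δ ^ 2 * nrmSq N i) * (u i) ^ 2 := by
  obtain ⟨hδ0, hδ1⟩ := hδ
  set S : Finset (Fin N → ℤ) := hu.toFinset with hS
  have husupp : ∀ i, i ∉ S → u i = 0 := by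
    intro i hi
    by_contra h
    exact hi (hu.mem_toFinset.mpr h)
  have hUsum : Summable (fun i : Fin N → ℤ => (u i) ^ 2) := by
    apply summable_of_ne_finset_zero (s := S)
    intro i hi; rw [husupp i hi]; ring
  have hWsum : Summable (fun i : Fin N → ℤ => (1 + δ ^ 2 * nrmSq N i) * (u i) ^ 2) := by
    apply summable_of_ne_finset_zero (s := S)
    intro i hi; rw [husupp i hi]; ring
  have hWnn : ∀ i, (0:ℝ) ≤ (1 + δ ^ 2 * nrmSq N i) * (u i) ^ 2 := fun i =>
    mul_nonneg (by nlinarith [nrmSq_nonneg N i, sq_nonneg δ]) (sq_nonneg _)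
  have step : ∀ j : Fin N,
      -(∑' i : Fin N → ℤ, (u (i + Pi.single j 1) - u i) *
          ((1 + δ ^ 2 * nrmSq N (i + Pi.single j 1)) * u (i + Pi.single j 1) -
            (1 + δ ^ 2 * nrmSq N i) * u i))
      ≤ δ ^ 2 * ∑' i : Fin N → ℤ, (u i) ^ 2 := by
    intro j
    set e : Fin N → ℤ := Pi.single j 1 with he
    set F : (Fin N → ℤ) → ℝ := fun i => (u (i + e) - u i) *
          ((1 + δ ^ 2 * nrmSq N (i + e)) * u (i + e) - (1 + δ ^ 2 * nrmSq N i) * u i) with hF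
    set G : (Fin N → ℤ) → ℝ := fun i => δ ^ 2 * (2 * (i j : ℝ) + 1) / 2 * (u i) ^ 2 with hG
    set H : (Fin N → ℤ) → ℝ := fun i => δ ^ 2 * (2 * (i j : ℝ) - 1) / 2 * (u i) ^ 2 with hH
    have hje : ∀ i : Fin N → ℤ, ((i + e) j : ℝ) = (i j : ℝ) + 1 := by
      intro i
      simp [he, Pi.single_eq_same]
    have hGe : ∀ i, H (i + e) = δ ^ 2 * (2 * (i j : ℝ) + 1) / 2 * (u (i + e)) ^ 2 := by
      intro i
      simp only [hH, hje]
      ring_nf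
    have hFsum : Summable F := by
      apply summable_of_ne_finset_zero (s := S ∪ S.image (fun i => i - e))
      intro i hi
      rw [Finset.mem_union, not_or] at hi
      have h1 : u i = 0 := husupp i hi.1
      have h2 : u (i + e) = 0 := by
        apply husupp
        intro hmem
        exact hi.2 (Finset.mem_image.mpr ⟨i + e, hmem, by abel⟩)
      simp [hF, h1, h2]
    have hGsum : Summable G := by
      apply summable_of_ne_finset_zero (s := S)
      intro i hi; simp [hG, husupp i hi]
    have hHsum : Summable H := by
      apply summable_of_ne_finset_zero (s := S)
      intro i hi; simp [hH, husupp i hi]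
    have hHesum : Summable (fun i => H (i + e)) :=
      ((Equiv.addRight e).summable_iff (f := H)).mpr hHsum
    have key : ∀ i, -F i ≤ G i - H (i + e) := by
      intro i
      rw [hGe]
      simp only [hF, hG]
      set a := u i
      set b := u (i + e)
      have hshift : nrmSq N (i + e) = nrmSq N i + (2 * (i j : ℝ) + 1) := nrmSq_shift N j i
      set v := 1 + δ ^ 2 * nrmSq N i with hv
      have hvpos : 0 < v := by nlinarith [nrmSq_nonneg N i, sq_nonneg δ]
      have hW : 1 + δ ^ 2 * nrmSq N (i + e) = v + δ ^ 2 * (2 * (i j : ℝ) + 1) := by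
        rw [hshift]; ring
      rw [hW]
      set d := δ ^ 2 * (2 * (i j : ℝ) + 1) with hd
      have hWpos : 0 < v + d := by
        have := nrmSq_nonneg N (i + e)
        nlinarith [sq_nonneg δ]
      nlinarith [mul_nonneg (le_of_lt (by linarith : (0:ℝ) < 2 * v + d)) (sq_nonneg (a - b))]
    have main : -(∑' i, F i) ≤ ∑' i, (G i - H (i + e)) := by
      rw [← tsum_neg]
      exact Summable.tsum_le_tsum key hFsum.neg (hGsum.sub hHesum)
    have split : ∑' i, (G i - H (i + e)) = (∑' i, G i) - ∑' i, H (i + e) :=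
      Summable.tsum_sub hGsum hHesum
    have shift : ∑' i, H (i + e) = ∑' i, H i := (Equiv.addRight e).tsum_eq H
    have diff : (∑' i, G i) - (∑' i, H i) = ∑' i, (G i - H i) := (Summable.tsum_sub hGsum hHsum).symm
    have GH : ∀ i, G i - H i = δ ^ 2 * (u i) ^ 2 := by
      intro i; simp only [hG, hH]; ring
    calc -(∑' i, F i) ≤ ∑' i, (G i - H (i + e)) := main
      _ = (∑' i, G i) - ∑' i, H i := by rw [split, shift]
      _ = ∑' i, (G i - H i) := diff
      _ = ∑' i, δ ^ 2 * (u i) ^ 2 := tsum_congr GH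
      _ = δ ^ 2 * ∑' i, (u i) ^ 2 := tsum_mul_left
  have total : -(∑ j : Fin N, ∑' i : Fin N → ℤ,
        (u (i + Pi.single j 1) - u i) *
          ((1 + δ ^ 2 * nrmSq N (i + Pi.single j 1)) * u (i + Pi.single j 1) -
            (1 + δ ^ 2 * nrmSq N i) * u i))
      ≤ (N : ℝ) * (δ ^ 2 * ∑' i : Fin N → ℤ, (u i) ^ 2) := by
    rw [← Finset.sum_neg_distrib]
    calc (∑ j : Fin N, -(∑' i : Fin N → ℤ,
        (u (i + Pi.single j 1) - u i) *
          ((1 + δ ^ 2 * nrmSq N (i + Pi.single j 1)) * u (i + Pi.single j 1) -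
            (1 + δ ^ 2 * nrmSq N i) * u i)))
        ≤ ∑ _j : Fin N, δ ^ 2 * ∑' i : Fin N → ℤ, (u i) ^ 2 :=
          Finset.sum_le_sum fun j _ => step j
      _ = (N : ℝ) * (δ ^ 2 * ∑' i : Fin N → ℤ, (u i) ^ 2) := by
          simp [Finset.sum_const, Finset.card_univ, nsmul_eq_mul]
  have hX : δ ^ 2 * ∑' i : Fin N → ℤ, (u i) ^ 2
      ≤ δ ^ 2 * ∑' i : Fin N → ℤ, (1 + δ ^ 2 * nrmSq N i) * (u i) ^ 2 := by
    apply mul_le_mul_of_nonneg_left _ (sq_nonneg δ)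
    refine Summable.tsum_le_tsum (fun i => ?_) hUsum hWsum
    nlinarith [mul_nonneg (mul_nonneg (sq_nonneg δ) (nrmSq_nonneg N i)) (sq_nonneg (u i))]
  have hXnn : 0 ≤ ∑' i : Fin N → ℤ, (1 + δ ^ 2 * nrmSq N i) * (u i) ^ 2 :=
    tsum_nonneg hWnn
  calc -(∑ j : Fin N, ∑' i : Fin N → ℤ,
        (u (i + Pi.single j 1) - u i) *
          ((1 + δ ^ 2 * nrmSq N (i + Pi.single j 1)) * u (i + Pi.single j 1) -
            (1 + δ ^ 2 * nrmSq N i) * u i))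
      ≤ (N : ℝ) * (δ ^ 2 * ∑' i : Fin N → ℤ, (u i) ^ 2) := total
    _ ≤ (N : ℝ) * (δ ^ 2 * ∑' i : Fin N → ℤ, (1 + δ ^ 2 * nrmSq N i) * (u i) ^ 2) :=
        mul_le_mul_of_nonneg_left hX (Nat.cast_nonneg N)
    _ ≤ 3 * N * δ ^ 2 * ∑' i : Fin N → ℤ, (1 + δ ^ 2 * nrmSq N i) * (u i) ^ 2 := by
        nlinarith [mul_nonneg (mul_nonneg (Nat.cast_nonneg N : (0:ℝ) ≤ (N:ℝ)) (sq_nonneg δ)) hXnn]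
end
end

section
/- Let μ_n be Borel probability measures on ℓ² converging weakly to μ, and suppose for every bounded Lipschitz φ : ℓ² → ℝ, every t ≥ 0, and every n, ∫ φ(P_t^{(n)} δ_x) dμ_n(x) = ∫ φ dμ_n where P_t^{(n)} are Markov transition semigroups (μ_n is P^{(n)}-invariant). If for every t ≥ 0 and bounded Lipschitz φ, sup_x |E[φ(u^{(n)}(t,x))] - φ(S(t)x)| → 0 where S(t) is a continuous deterministic semigroup on ℓ², then μ is invariant under S: ∫ φ(S(t)x) dμ(x) = ∫ φ dμ for all t ≥ 0 and all bounded continuous φ. -/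
open MeasureTheory Filter
noncomputable section

instance (N : ℕ) : MeasurableSpace (ellTwo N) := borel _
instance (N : ℕ) : BorelSpace (ellTwo N) := ⟨rfl⟩

/-!
Fix `t` and a bounded Lipschitz `ψ`. For large `n` the functions `P n t ψ` are uniformly close
to `ψ ∘ S t`, so invariance of `μn n` makes `∫ ψ ∘ S t ∂μn n - ∫ ψ ∂μn n` small; by weak
convergence both integrals pass to the limit, hence `∫ ψ ∘ S t ∂μ = ∫ ψ ∂μ`. Thickened indicators
of closed sets are bounded Lipschitz, so this already forces `μ.map (S t) = μ`, which gives the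
identity for all bounded continuous `φ`.
-/

namespace MeasureTheory

variable {X : Type*} [MeasurableSpace X]

theorem _root_.Continuous.integrable_of_forall_abs_le [TopologicalSpace X] [OpensMeasurableSpace X]
    {ν : Measure X} [IsFiniteMeasure ν] {f : X → ℝ} (hf : Continuous f)
    (hb : ∃ M, ∀ x, |f x| ≤ M) : Integrable f ν :=
  let ⟨M, hM⟩ := hb
  .of_bound hf.aestronglyMeasurable M (ae_of_all _ hM)

theorem Measure.ext_of_forall_integral_lipschitz_eq [PseudoEMetricSpace X] [BorelSpace X]
    {μ ν : Measure X} [IsFiniteMeasure μ] [IsFiniteMeasure ν]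
    (h : ∀ f : X → ℝ, (∃ C : NNReal, LipschitzWith C f) → (∃ M, ∀ x, |f x| ≤ M) →
      ∫ x, f x ∂μ = ∫ x, f x ∂ν) : μ = ν := by
  have hclosed : ∀ F : Set X, IsClosed F → μ F = ν F := by
    intro F hF
    have hδ : ∀ n : ℕ, (0 : ℝ) < 1 / (n + 1) := fun _ => Nat.one_div_pos_of_nat
    have hμ := tendsto_integral_thickenedIndicator_of_isClosed μ hF hδ
      tendsto_one_div_add_atTop_nhds_zero_nat
    have hν := tendsto_integral_thickenedIndicator_of_isClosed ν hF hδ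
      tendsto_one_div_add_atTop_nhds_zero_nat
    have heq : ∀ n, ∫ x, (thickenedIndicator (hδ n) F x : ℝ) ∂μ
        = ∫ x, (thickenedIndicator (hδ n) F x : ℝ) ∂ν := fun n =>
      h _ ⟨_, isometry_subtype_coe.lipschitz.comp (lipschitzWith_thickenedIndicator (hδ n) F)⟩
        ⟨1, fun x => by simpa using thickenedIndicator_le_one (hδ n) F x⟩
    rw [funext heq] at hμ
    exact (measureReal_eq_measureReal_iff).mp (tendsto_nhds_unique hμ hν)
  refine ext_of_generate_finite _ (BorelSpace.measurable_eq.trans borel_eq_generateFrom_isClosed)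
    isPiSystem_isClosed hclosed (hclosed _ isClosed_univ)

theorem abs_integral_sub_integral_le_of_forall_abs_sub_le {ν : Measure X}
    [IsProbabilityMeasure ν] {f g : X → ℝ} {ε : ℝ} (hf : Integrable f ν) (hg : Integrable g ν)
    (h : ∀ x, |f x - g x| ≤ ε) : |∫ x, f x ∂ν - ∫ x, g x ∂ν| ≤ ε := by
  rw [← integral_sub hf hg]
  simpa using norm_integral_le_of_norm_le_const (μ := ν) (f := fun x => f x - g x) (ae_of_all _ h)

/-- An identity `∫ g₀ ∂ν = ∫ h ∂ν` carries no information when `g₀` is not integrable (its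
integral is then `0` by convention); the shifted identity for `g₁` rules out that both are junk. -/
theorem abs_integral_sub_integral_le_of_shifted_approx {ν : Measure X} [IsProbabilityMeasure ν]
    {f h g₀ g₁ : X → ℝ} {ε : ℝ} (hf : Integrable f ν) (hh : Integrable h ν)
    (hg₀ : ∫ x, g₀ x ∂ν = ∫ x, h x ∂ν) (hg₁ : ∫ x, g₁ x ∂ν = ∫ x, h x + 1 ∂ν)
    (hg₀f : ∀ x, |g₀ x - f x| ≤ ε) (hg₁f : ∀ x, |g₁ x - (f x + 1)| ≤ ε) :
    |∫ x, f x ∂ν - ∫ x, h x ∂ν| ≤ ε := by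
  have integral_add_one : ∀ {u : X → ℝ}, Integrable u ν → ∫ x, u x + 1 ∂ν = ∫ x, u x ∂ν + 1 :=
    fun hu => by simp [integral_add hu (integrable_const 1)]
  rw [integral_add_one hh] at hg₁
  by_cases hg₀i : Integrable g₀ ν
  · rw [← hg₀, abs_sub_comm]
    exact abs_integral_sub_integral_le_of_forall_abs_sub_le hg₀i hf hg₀f
  · have hh0 : ∫ x, h x ∂ν = 0 := by rw [← hg₀, integral_undef hg₀i]
    have hg₁i : Integrable g₁ ν := by
      by_contra hg₁i
      rw [integral_undef hg₁i, hh0] at hg₁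
      norm_num at hg₁
    have key := abs_integral_sub_integral_le_of_forall_abs_sub_le hg₁i
      (g := fun x => f x + 1) (hf.add (integrable_const 1)) hg₁f
    rwa [hg₁, integral_add_one hf, abs_sub_comm, add_sub_add_right_eq_sub] at key

theorem integral_comp_eq_of_tendsto_of_approx [TopologicalSpace X] [OpensMeasurableSpace X]
    {μn : ℕ → Measure X} [∀ n, IsProbabilityMeasure (μn n)] {μ : Measure X}
    (hweak : ∀ φ : X → ℝ, Continuous φ → (∃ M, ∀ x, |φ x| ≤ M) →
      Tendsto (fun n => ∫ x, φ x ∂(μn n)) atTop (nhds (∫ x, φ x ∂μ)))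
    {T : X → X} {ψ : X → ℝ} {Q₀ Q₁ : ℕ → X → ℝ} (hT : Continuous T) (hψ : Continuous ψ)
    (hψb : ∃ M, ∀ x, |ψ x| ≤ M)
    (hQ₀ : ∀ n, ∫ x, Q₀ n x ∂(μn n) = ∫ x, ψ x ∂(μn n))
    (hQ₁ : ∀ n, ∫ x, Q₁ n x ∂(μn n) = ∫ x, ψ x + 1 ∂(μn n))
    (hQ₀ψ : ∀ ε > 0, ∀ᶠ n in atTop, ∀ x, |Q₀ n x - ψ (T x)| ≤ ε)
    (hQ₁ψ : ∀ ε > 0, ∀ᶠ n in atTop, ∀ x, |Q₁ n x - (ψ (T x) + 1)| ≤ ε) :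
    ∫ x, ψ (T x) ∂μ = ∫ x, ψ x ∂μ := by
  have hψTb : ∃ M, ∀ x, |ψ (T x)| ≤ M := hψb.imp fun _ hM x => hM (T x)
  have hlim := (hweak _ (hψ.comp hT) hψTb).dist (hweak ψ hψ hψb)
  refine eq_of_forall_dist_le fun ε hε => le_of_tendsto hlim ?_
  filter_upwards [hQ₀ψ ε hε, hQ₁ψ ε hε] with n h₀ h₁
  exact abs_integral_sub_integral_le_of_shifted_approx ((hψ.comp hT).integrable_of_forall_abs_le
    hψTb) (hψ.integrable_of_forall_abs_le hψb) (hQ₀ n) (hQ₁ n) h₀ h₁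

end MeasureTheory

/-- If Borel probability measures `μ_n` on ℓ² converge weakly to `μ`, each
`μ_n` is invariant for a Markov semigroup `P^{(n)}` (tested against bounded Lipschitz
functions), and `P_t^{(n)} φ` converges to `φ ∘ S(t)` uniformly in the initial point for
a continuous deterministic semigroup `S`, then `μ` is invariant under `S`:
`∫ φ(S(t)x) dμ = ∫ φ dμ` for all `t ≥ 0` and all bounded continuous `φ`. -/
theorem limit_of_invariant_measures_is_invariant (N : ℕ)
    (μn : ℕ → Measure (ellTwo N)) (μ : Measure (ellTwo N))
    (hprobn : ∀ n, IsProbabilityMeasure (μn n)) (hprob : IsProbabilityMeasure μ)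
    (hweak : ∀ φ : ellTwo N → ℝ, Continuous φ → (∃ M, ∀ x, |φ x| ≤ M) →
      Tendsto (fun n => ∫ x, φ x ∂(μn n)) atTop (nhds (∫ x, φ x ∂μ)))
    (P : ℕ → ℝ → (ellTwo N → ℝ) → (ellTwo N → ℝ))
    (hinv : ∀ (n : ℕ) (t : ℝ), 0 ≤ t → ∀ φ : ellTwo N → ℝ,
      (∃ C : NNReal, LipschitzWith C φ) → (∃ M, ∀ x, |φ x| ≤ M) →
      ∫ x, P n t φ x ∂(μn n) = ∫ x, φ x ∂(μn n))
    (S : ℝ → ellTwo N → ellTwo N)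
    (hS : ∀ t : ℝ, 0 ≤ t → Continuous (S t))
    (hconv : ∀ (t : ℝ), 0 ≤ t → ∀ φ : ellTwo N → ℝ,
      (∃ C : NNReal, LipschitzWith C φ) → (∃ M, ∀ x, |φ x| ≤ M) →
      ∀ ε : ℝ, 0 < ε → ∃ n₀ : ℕ, ∀ n ≥ n₀, ∀ x, |P n t φ x - φ (S t x)| ≤ ε) :
    ∀ t : ℝ, 0 ≤ t → ∀ φ : ellTwo N → ℝ, Continuous φ → (∃ M, ∀ x, |φ x| ≤ M) →
      ∫ x, φ (S t x) ∂μ = ∫ x, φ x ∂μ := by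
  intro t ht φ hφ hφb
  have hSt := hS t ht
  have hlip : ∀ ψ : ellTwo N → ℝ, (∃ C : NNReal, LipschitzWith C ψ) → (∃ M, ∀ x, |ψ x| ≤ M) →
      ∫ x, ψ (S t x) ∂μ = ∫ x, ψ x ∂μ := by
    rintro ψ ⟨C, hC⟩ ⟨M, hM⟩
    have hψ₁ : ∃ C : NNReal, LipschitzWith C fun x => ψ x + 1 :=
      ⟨C + 0, hC.add (LipschitzWith.const 1)⟩
    have hM₁ : ∀ x, |ψ x + 1| ≤ M + 1 := fun x => (abs_add_le _ _).trans (by simp [hM x])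
    exact integral_comp_eq_of_tendsto_of_approx hweak hSt hC.continuous ⟨M, hM⟩
      (fun n => hinv n t ht ψ ⟨C, hC⟩ ⟨M, hM⟩) (fun n => hinv n t ht _ hψ₁ ⟨M + 1, hM₁⟩)
      (fun ε hε => eventually_atTop.2 (hconv t ht ψ ⟨C, hC⟩ ⟨M, hM⟩ ε hε))
      (fun ε hε => eventually_atTop.2 (hconv t ht _ hψ₁ ⟨M + 1, hM₁⟩ ε hε))
  have hSm := hSt.measurable.aemeasurable (μ := μ)
  have hmap : μ.map (S t) = μ := by
    refine Measure.ext_of_forall_integral_lipschitz_eq fun ψ hψ hψb => ?_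
    obtain ⟨C, hC⟩ := hψ
    rw [integral_map hSm hC.continuous.aestronglyMeasurable]
    exact hlip ψ ⟨C, hC⟩ hψb
  rw [← integral_map hSm hφ.aestronglyMeasurable, hmap]
end
end
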